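/- Let V = ℂ^n, Σ ≤ GL(V) a finite group, G ≤ Σ with ℓ = [Σ:G], and 𝒮 = Σ/G the set of left cosets with its Σ-action. Then the total number of reflections contained in G equals Σ_{P∈𝒫} ( |C_P| · o(P) / ℓ − 1 ), where 𝒫 is the set of all reflecting hyperplanes of Σ, C_P is the subgroup of elements of Σ fixing P pointwise, and o(P) is the number of orbits of C_P on 𝒮. -/

import Mathlib

open MvPolynomial

/-- The fixed-point subspace of a linear automorphism `g` of `ℂ^n`. -/
noncomputable def fixedSubspace {n : ℕ} (g : (Fin n → ℂ) ≃ₗ[ℂ] (Fin n → ℂ)) :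
    Submodule ℂ (Fin n → ℂ) where
  carrier := {v | g v = v}
  add_mem' := by
    intro a b ha hb
    simp only [Set.mem_setOf_eq] at *
    rw [map_add, ha, hb]
  zero_mem' := by simp
  smul_mem' := by
    intro c v hv
    simp only [Set.mem_setOf_eq] at *
    rw [map_smul, hv]

/-- `g` is a reflection: a nonidentity linear automorphism whose fixed-point subspace is a
hyperplane of `ℂ^n`. -/
def IsReflection {n : ℕ} (g : (Fin n → ℂ) ≃ₗ[ℂ] (Fin n → ℂ)) : Prop :=
  g ≠ 1 ∧ Module.finrank ℂ (fixedSubspace g) = n - 1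

/-- The set of reflecting hyperplanes of a group `Sg` of linear automorphisms of `ℂ^n`. -/
def reflHyperplanes {n : ℕ} (Sg : Subgroup ((Fin n → ℂ) ≃ₗ[ℂ] (Fin n → ℂ))) :
    Set (Submodule ℂ (Fin n → ℂ)) :=
  {P | ∃ g ∈ Sg, IsReflection g ∧ fixedSubspace g = P}

/-- The subgroup `C_P` of elements of `Sg` fixing `P` pointwise. -/
noncomputable def pointwiseStab {n : ℕ} (Sg : Subgroup ((Fin n → ℂ) ≃ₗ[ℂ] (Fin n → ℂ)))
    (P : Submodule ℂ (Fin n → ℂ)) : Subgroup ↥Sg where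
  carrier := {g | ∀ v ∈ P, (g : (Fin n → ℂ) ≃ₗ[ℂ] (Fin n → ℂ)) v = v}
  one_mem' := by
    intro v hv
    rfl
  mul_mem' := by
    intro a b ha hb v hv
    have : (↑(a * b) : (Fin n → ℂ) ≃ₗ[ℂ] (Fin n → ℂ)) v
        = (a : (Fin n → ℂ) ≃ₗ[ℂ] (Fin n → ℂ)) ((b : (Fin n → ℂ) ≃ₗ[ℂ] (Fin n → ℂ)) v) := rfl
    rw [this, hb v hv, ha v hv]
  inv_mem' := by
    intro a ha v hv
    have h1 : (a : (Fin n → ℂ) ≃ₗ[ℂ] (Fin n → ℂ)) v = v := ha v hv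
    have : (↑(a⁻¹) : (Fin n → ℂ) ≃ₗ[ℂ] (Fin n → ℂ)) v
        = ((a : (Fin n → ℂ) ≃ₗ[ℂ] (Fin n → ℂ)).symm) v := rfl
    rw [this]
    conv_lhs => rw [← h1]
    exact (a : (Fin n → ℂ) ≃ₗ[ℂ] (Fin n → ℂ)).symm_apply_apply v

/-- The number of orbits of `C_P` acting on the set `𝒮 = Sg/G` of left cosets of `G`. -/
noncomputable def numOrbits {n : ℕ} (Sg G : Subgroup ((Fin n → ℂ) ≃ₗ[ℂ] (Fin n → ℂ)))
    (P : Submodule ℂ (Fin n → ℂ)) : ℕ :=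
  Nat.card (MulAction.orbitRel.Quotient ↥(pointwiseStab Sg P) (↥Sg ⧸ G.subgroupOf Sg))

/-- `ℬ` is a `Sg`-orbit of reflecting hyperplanes of `Sg`. -/
def IsHyperplaneOrbit {n : ℕ} (Sg : Subgroup ((Fin n → ℂ) ≃ₗ[ℂ] (Fin n → ℂ)))
    (ℬ : Set (Submodule ℂ (Fin n → ℂ))) : Prop :=
  ℬ.Nonempty ∧ ℬ ⊆ reflHyperplanes Sg ∧
  (∀ P ∈ ℬ, ∀ σ ∈ Sg, P.map (σ : (Fin n → ℂ) ≃ₗ[ℂ] (Fin n → ℂ)).toLinearMap ∈ ℬ) ∧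
  ∀ P ∈ ℬ, ∀ Q ∈ ℬ, ∃ σ ∈ Sg, P.map (σ : (Fin n → ℂ) ≃ₗ[ℂ] (Fin n → ℂ)).toLinearMap = Q


/-!
Let `𝒮 = Σ/G`, so `ℓ = |𝒮|`. Burnside's lemma for `C_P` acting on `𝒮` reads
`|C_P| · o(P) = ℓ + ∑_{γ ∈ C_P, γ ≠ 1} |Fix_𝒮 γ|`, and the nonidentity elements of `C_P` are exactly
the reflections of `Σ` with hyperplane `P`. Summing over `P` therefore leaves
`∑_γ |Fix_𝒮 γ|` over all reflections `γ` of `Σ`. Counted coset by coset instead, the reflections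
fixing `σG` are those of `σGσ⁻¹`, and conjugation by `σ` matches them with the reflections of `G`;
so the sum is `ℓ · |ℛ(G)|`.
-/

open MulAction Finset

section GroupActions

variable {S X : Type*} [Group S] [MulAction S X]

theorem MulAction.card_orbits_mul_card_eq_sum_card_fixedBy [Fintype S] [Finite X] :
    Nat.card (orbitRel.Quotient S X) * Nat.card S = ∑ γ : S, Nat.card (fixedBy X γ) := by
  rw [← Nat.card_sigma, Nat.card_congr (sigmaFixedByEquivOrbitsProdGroup S X), Nat.card_prod]

theorem Subgroup.card_mul_card_orbits_eq_card_add_sum_fixedBy [Fintype S] [DecidableEq S]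
    [Finite X] (C : Subgroup S) [DecidablePred (· ∈ C)] :
    Nat.card C * Nat.card (orbitRel.Quotient C X) =
      Nat.card X + ∑ γ with γ ∈ C ∧ γ ≠ 1, Nat.card (fixedBy X γ) := by
  have hone : (1 : S) ∈ ({γ | γ ∈ C} : Finset S) := by simp [C.one_mem]
  calc Nat.card C * Nat.card (orbitRel.Quotient C X)
      = ∑ γ : C, Nat.card (fixedBy X (γ : S)) := by
        rw [mul_comm, card_orbits_mul_card_eq_sum_card_fixedBy]; rfl
    _ = ∑ γ with γ ∈ C, Nat.card (fixedBy X γ) := by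
        rw [sum_subtype (p := (· ∈ C)) _ fun _ => mem_filter_univ _]
    _ = Nat.card X + ∑ γ with γ ∈ C ∧ γ ≠ 1, Nat.card (fixedBy X γ) := by
        rw [← add_sum_erase _ _ hone, fixedBy_one_eq_univ, Nat.card_univ]
        congr 2
        ext γ
        simp [and_comm]

theorem Subgroup.sum_card_fixedBy_quotient_eq_index_mul [Fintype S] (H : Subgroup S)
    (p : S → Prop) [DecidablePred p] (hp : ∀ σ γ, p γ → p (σ * γ * σ⁻¹)) :
    ∑ γ with p γ, Nat.card (fixedBy (S ⧸ H) γ) = H.index * Nat.card {γ // γ ∈ H ∧ p γ} := by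
  classical
  have := Fintype.ofFinite (S ⧸ H)
  have hfix : ∀ x : S ⧸ H, #{γ | p γ ∧ γ • x = x} = Nat.card {γ // γ ∈ H ∧ p γ} := by
    intro x
    obtain ⟨σ, rfl⟩ := QuotientGroup.mk_surjective x
    have hstab : ∀ γ : S, γ • (σ : S ⧸ H) = σ ↔ σ⁻¹ * γ * σ ∈ H := by
      intro γ
      rw [MulAction.Quotient.smul_mk, QuotientGroup.eq, ← inv_mem_iff]
      simp [mul_assoc]
    rw [Nat.card_eq_fintype_card, Fintype.card_subtype]
    refine card_nbij' (fun γ => σ⁻¹ * γ * σ) (fun δ => σ * δ * σ⁻¹) ?_ ?_ ?_ ?_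
    · intro γ hγ
      simp only [coe_filter, Set.mem_ofPred_eq, mem_univ, true_and] at hγ ⊢
      exact ⟨(hstab γ).1 hγ.2, by simpa using hp σ⁻¹ γ hγ.1⟩
    · intro δ hδ
      simp only [coe_filter, Set.mem_ofPred_eq, mem_univ, true_and] at hδ ⊢
      exact ⟨hp σ δ hδ.2, (hstab _).2 (by simpa [mul_assoc] using hδ.1)⟩
    · intro γ _
      simp [mul_assoc]
    · intro δ _
      simp [mul_assoc]
  calc ∑ γ with p γ, Nat.card (fixedBy (S ⧸ H) γ)
      = ∑ γ with p γ, #{x : S ⧸ H | γ • x = x} := by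
        refine sum_congr rfl fun γ _ => ?_
        rw [Nat.card_eq_fintype_card, Fintype.card_subtype]
        rfl
    _ = ∑ x : S ⧸ H, #{γ | p γ ∧ γ • x = x} := by
        simp only [card_filter]
        rw [sum_comm]
        simp only [← card_filter, filter_filter]
    _ = H.index * Nat.card {γ // γ ∈ H ∧ p γ} := by
        rw [sum_congr rfl fun x _ => hfix x, sum_const, card_univ, ← Nat.card_eq_fintype_card,
          ← Subgroup.index_eq_card, smul_eq_mul]

end GroupActions

theorem Subgroup.card_subtype_mem_subgroupOf_and {M : Type*} [Group M] {H K : Subgroup M}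
    (hHK : H ≤ K) (p : M → Prop) :
    Nat.card {γ : K // γ ∈ H.subgroupOf K ∧ p γ} = Nat.card {g // g ∈ H ∧ p g} :=
  Nat.card_congr
    { toFun := fun γ => ⟨γ, γ.2⟩
      invFun := fun g => ⟨⟨g, hHK g.2.1⟩, g.2⟩
      left_inv := fun _ => rfl
      right_inv := fun _ => rfl }

section Reflections

variable {n : ℕ}

local notation "V" => Fin n → ℂ

theorem fixedSubspace_mul_mul_inv (h g : V ≃ₗ[ℂ] V) :
    fixedSubspace (h * g * h⁻¹) = (fixedSubspace g).map h.toLinearMap := by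
  ext v
  refine ⟨fun hv => ⟨h⁻¹ v, ?_, h.apply_symm_apply v⟩, ?_⟩
  · have hv' : h (g (h.symm v)) = v := hv
    exact h.injective (hv'.trans (h.apply_symm_apply v).symm)
  · rintro ⟨w, hw, rfl⟩
    change h (g (h.symm (h w))) = h w
    rw [h.symm_apply_apply, hw]

theorem IsReflection.mul_mul_inv {g : V ≃ₗ[ℂ] V} (hg : IsReflection g) (h : V ≃ₗ[ℂ] V) :
    IsReflection (h * g * h⁻¹) :=
  ⟨by simpa [conj_eq_one_iff] using hg.1, by
    rw [fixedSubspace_mul_mul_inv, LinearEquiv.finrank_map_eq]; exact hg.2⟩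

theorem finrank_fixedSubspace_lt {g : V ≃ₗ[ℂ] V} (hg : g ≠ 1) :
    Module.finrank ℂ (fixedSubspace g) < n := by
  have hne : fixedSubspace g ≠ ⊤ := fun htop =>
    hg (LinearEquiv.ext fun v => (Submodule.eq_top_iff'.1 htop) v)
  simpa using Submodule.finrank_lt hne

theorem IsReflection.fixedSubspace_eq_of_le {g γ : V ≃ₗ[ℂ] V} (hg : IsReflection g) (hγ : γ ≠ 1)
    (hle : fixedSubspace g ≤ fixedSubspace γ) : fixedSubspace γ = fixedSubspace g :=
  (Submodule.eq_of_le_of_finrank_le hle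
    (hg.2 ▸ Nat.le_sub_one_of_lt (finrank_fixedSubspace_lt hγ))).symm

theorem reflHyperplanes_finite (Sg : Subgroup (V ≃ₗ[ℂ] V)) [Finite Sg] :
    (reflHyperplanes Sg).Finite :=
  (Set.finite_range fun γ : Sg => fixedSubspace (γ : V ≃ₗ[ℂ] V)).subset
    fun _ ⟨g, hg, _, hP⟩ => ⟨⟨g, hg⟩, hP⟩

theorem mem_pointwiseStab_and_ne_one_iff {Sg : Subgroup (V ≃ₗ[ℂ] V)} {P : Submodule ℂ V}
    (hP : P ∈ reflHyperplanes Sg) (γ : Sg) :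
    γ ∈ pointwiseStab Sg P ∧ γ ≠ 1 ↔ IsReflection (γ : V ≃ₗ[ℂ] V) ∧ fixedSubspace γ = P := by
  obtain ⟨g, -, hg, rfl⟩ := hP
  constructor
  · rintro ⟨hγP, hγ⟩
    have hγ' : (γ : V ≃ₗ[ℂ] V) ≠ 1 := by simpa using hγ
    have heq := hg.fixedSubspace_eq_of_le hγ' hγP
    exact ⟨⟨hγ', heq ▸ hg.2⟩, heq⟩
  · rintro ⟨hγ, hγP⟩
    rw [← hγP]
    exact ⟨fun v hv => hv, by simpa using hγ.1⟩

open Classical in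
theorem card_pointwiseStab_mul_numOrbits {Sg : Subgroup (V ≃ₗ[ℂ] V)} [Fintype Sg]
    (G : Subgroup (V ≃ₗ[ℂ] V)) {P : Submodule ℂ V} (hP : P ∈ reflHyperplanes Sg) :
    Nat.card (pointwiseStab Sg P) * numOrbits Sg G P =
      (G.subgroupOf Sg).index +
        ∑ γ ∈ univ.filter fun γ : Sg => IsReflection (γ : V ≃ₗ[ℂ] V) ∧ fixedSubspace γ = P,
          Nat.card (fixedBy (Sg ⧸ G.subgroupOf Sg) γ) := by
  rw [← filter_congr fun γ _ => mem_pointwiseStab_and_ne_one_iff hP γ, Subgroup.index_eq_card]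
  exact Subgroup.card_mul_card_orbits_eq_card_add_sum_fixedBy _

end Reflections

/-- The number of reflections of `Σ` contained in `G` equals
`Σ_{P∈𝒫} (|C_P|·o(P)/ℓ − 1)`, where `𝒫` is the set of all reflecting hyperplanes of `Σ` and
`o(P)` is the number of orbits of `C_P` on `𝒮 = Σ/G`. -/
theorem stmt8 {n : ℕ} (Sg G : Subgroup ((Fin n → ℂ) ≃ₗ[ℂ] (Fin n → ℂ)))
    (hfin : Finite ↥Sg) (hG : G ≤ Sg) (ℓ : ℕ) (hℓ : ℓ = (G.subgroupOf Sg).index) :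
    (Nat.card {g : (Fin n → ℂ) ≃ₗ[ℂ] (Fin n → ℂ) // g ∈ G ∧ IsReflection g} : ℚ) =
      ∑ᶠ P ∈ reflHyperplanes Sg,
        ((Nat.card ↥(pointwiseStab Sg P) : ℚ) * (numOrbits Sg G P : ℚ) / ℓ - 1) := by
  classical
  have := Fintype.ofFinite Sg
  have hℓ0 : (ℓ : ℚ) ≠ 0 := hℓ ▸ Nat.cast_ne_zero.2 Subgroup.index_ne_zero_of_finite
  have hsummand : ∀ P ∈ (reflHyperplanes_finite Sg).toFinset,
      (Nat.card (pointwiseStab Sg P) : ℚ) * numOrbits Sg G P / ℓ - 1 =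
        ((∑ γ ∈ univ.filter fun γ : Sg =>
            IsReflection (γ : (Fin n → ℂ) ≃ₗ[ℂ] (Fin n → ℂ)) ∧ fixedSubspace γ = P,
          Nat.card (fixedBy (Sg ⧸ G.subgroupOf Sg) γ) : ℕ) : ℚ) / ℓ := by
    intro P hP
    rw [← Nat.cast_mul, card_pointwiseStab_mul_numOrbits G ((Set.Finite.mem_toFinset _).1 hP), ← hℓ]
    push_cast
    field_simp
    ring
  rw [← (reflHyperplanes_finite Sg).coe_toFinset, finsum_mem_coe_finset, sum_congr rfl hsummand,
    ← sum_div, ← Nat.cast_sum]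
  simp_rw [← filter_filter]
  rw [sum_fiberwise_of_maps_to fun γ hγ => ?maps,
    Subgroup.sum_card_fixedBy_quotient_eq_index_mul _ _ fun σ γ hγ => by
      simpa using hγ.mul_mul_inv σ,
    Subgroup.card_subtype_mem_subgroupOf_and hG, ← hℓ]
  · push_cast
    field_simp
  case maps => exact (Set.Finite.mem_toFinset _).2 ⟨γ, γ.2, (mem_filter_univ γ).1 hγ, rfl⟩
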